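/- arXiv:1910.14675 — 3 statements merged into one kernel-verified Lean document; each statement's English description precedes it below -/
import Mathlib

section
/- Let H be a complex Hilbert space, U a positive bounded operator on H, and (y_i)_{i∈I} a Parseval frame for H. Then for any orthonormal basis E of H, ∑_{e∈E} ⟨Ue, e⟩ = ∑_{i∈I} ⟨U y_i, y_i⟩; i.e., the trace of a positive operator can be computed using any Parseval frame. -/
open scoped ComplexInnerProductSpace ENNReal NNReal

lemma paux {H : Type*} [NormedAddCommGroup H] [InnerProductSpace ℂ H] [CompleteSpace H]
    {ι : Type*} (e : HilbertBasis ι ℂ H) (x : H) :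
    ∑' b, (‖⟪x, e b⟫‖₊ ^ 2 : ℝ≥0∞) = (‖x‖₊ ^ 2 : ℝ≥0∞) := by
  have h := e.hasSum_inner_mul_inner x x
  have hre : HasSum (fun b => Complex.re (⟪x, e b⟫ * ⟪e b, x⟫)) (Complex.re ⟪x, x⟫) :=
    Complex.hasSum_re h
  have heq : ∀ b : ι, Complex.re (⟪x, e b⟫ * ⟪e b, x⟫) = ‖⟪x, e b⟫‖ ^ 2 := by
    intro b
    rw [mul_comm, ← inner_conj_symm x (e b), Complex.mul_conj]
    simp only [Complex.ofReal_re, Complex.normSq_eq_norm_sq, sq, ← inner_conj_symm x (e b), Complex.norm_conj]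
  have hre' : HasSum (fun b => (‖⟪x, e b⟫‖ ^ 2 : ℝ)) (‖x‖ ^ 2) := by
    have : Complex.re ⟪x, x⟫ = ‖x‖ ^ 2 := by
      rw [← inner_self_eq_norm_sq (𝕜 := ℂ) x]; rfl
    rw [this] at hre; simpa [heq] using hre
  calc ∑' b, (‖⟪x, e b⟫‖₊ ^ 2 : ℝ≥0∞)
      = ∑' b, ENNReal.ofReal (‖⟪x, e b⟫‖ ^ 2) := by
        congr 1; funext b
        rw [ENNReal.ofReal_pow (norm_nonneg _), ofReal_norm, enorm_eq_nnnorm]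
    _ = ENNReal.ofReal (∑' b, (‖⟪x, e b⟫‖ ^ 2 : ℝ)) :=
        (ENNReal.ofReal_tsum_of_nonneg (fun b => sq_nonneg _) hre'.summable).symm
    _ = (‖x‖₊ ^ 2 : ℝ≥0∞) := by
        rw [hre'.tsum_eq, ENNReal.ofReal_pow (norm_nonneg _), ofReal_norm, enorm_eq_nnnorm]

set_option synthInstance.maxHeartbeats 1000000 in
set_option maxHeartbeats 1000000 in
/-- If `U` is a positive bounded operator on a complex Hilbert space `H`, `(y i)` is a
Parseval frame and `e` is an orthonormal (Hilbert) basis, then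
`∑ ⟨U e_b, e_b⟩ = ∑ ⟨U y_i, y_i⟩`, i.e. the trace of a positive operator can be computed
using any Parseval frame. -/
theorem stmt4 {H : Type*} [NormedAddCommGroup H] [InnerProductSpace ℂ H] [CompleteSpace H]
    {I ι : Type*} (U : H →L[ℂ] H) (hpos : U.IsPositive) (y : I → H)
    (hy : ∀ x : H, ∑' i, (‖⟪x, y i⟫‖₊ ^ 2 : ℝ≥0∞) = (‖x‖₊ ^ 2 : ℝ≥0∞))
    (e : HilbertBasis ι ℂ H) :
    ∑' b, ENNReal.ofReal (Complex.re ⟪U (e b), e b⟫) =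
      ∑' i, ENNReal.ofReal (Complex.re ⟪U (y i), y i⟫) := by
  have hU : 0 ≤ U := (ContinuousLinearMap.nonneg_iff_isPositive U).mpr hpos
  set T := CFC.sqrt U with hT
  have hTsa : IsSelfAdjoint T := IsSelfAdjoint.of_nonneg (CFC.sqrt_nonneg U)
  have hTT : T * T = U := CFC.sqrt_mul_sqrt_self U hU
  have key : ∀ x : H, ENNReal.ofReal (Complex.re ⟪U x, x⟫) = (‖T x‖₊ ^ 2 : ℝ≥0∞) := by
    intro x
    have h1 : ⟪U x, x⟫ = ⟪T x, T x⟫ := by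
      rw [← hTT]
      calc ⟪(T * T) x, x⟫ = ⟪ContinuousLinearMap.adjoint T (T x), x⟫ := by
            rw [hTsa.adjoint_eq]; rfl
        _ = ⟪T x, T x⟫ := ContinuousLinearMap.adjoint_inner_left T x (T x)
    rw [h1]
    have : Complex.re ⟪T x, T x⟫ = ‖T x‖ ^ 2 := by
      rw [← inner_self_eq_norm_sq (𝕜 := ℂ) (T x)]; rfl
    rw [this, ENNReal.ofReal_pow (norm_nonneg _), ofReal_norm, enorm_eq_nnnorm]
  have hswap : ∀ (i : I) (b : ι), (‖⟪T (e b), y i⟫‖₊ : ℝ≥0∞) = ‖⟪T (y i), e b⟫‖₊ := by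
    intro i b
    have h2 : ⟪T (y i), e b⟫ = ⟪y i, T (e b)⟫ := by
      conv_lhs => rw [← hTsa.adjoint_eq]
      exact ContinuousLinearMap.adjoint_inner_left T (e b) (y i)
    have : ⟪T (e b), y i⟫ = starRingEnd ℂ ⟪T (y i), e b⟫ := by
      rw [h2, inner_conj_symm]
    rw [this, RCLike.nnnorm_conj]
  calc ∑' b, ENNReal.ofReal (Complex.re ⟪U (e b), e b⟫)
      = ∑' b, (‖T (e b)‖₊ ^ 2 : ℝ≥0∞) := by simp only [key]
    _ = ∑' b, ∑' i, (‖⟪T (e b), y i⟫‖₊ ^ 2 : ℝ≥0∞) := by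
        congr 1; funext b; rw [hy]
    _ = ∑' i, ∑' b, (‖⟪T (e b), y i⟫‖₊ ^ 2 : ℝ≥0∞) := ENNReal.tsum_comm
    _ = ∑' i, ∑' b, (‖⟪T (y i), e b⟫‖₊ ^ 2 : ℝ≥0∞) := by
        congr 1; funext i; congr 1; funext b; rw [← hswap i b]
    _ = ∑' i, (‖T (y i)‖₊ ^ 2 : ℝ≥0∞) := by
        congr 1; funext i; exact paux e (T (y i))
    _ = ∑' i, ENNReal.ofReal (Complex.re ⟪U (y i), y i⟫) := by simp only [key]
end

section
/- Let (Ω, m) be a σ-finite measure space, H a separable Hilbert space, W a closed subspace of L²(Ω, H), and U : W → L²(Ω, H) a bounded linear operator such that U(gφ) = g·(Uφ) for all g ∈ L^∞(Ω) and φ ∈ W with gφ ∈ W. Then for every φ ∈ W, ‖(Uφ)(ω)‖ ≤ ‖U‖ · ‖φ(ω)‖ for m-almost every ω ∈ Ω. -/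
open MeasureTheory
open scoped ENNReal

section Aux

variable {Ω : Type*} [MeasurableSpace Ω] {μ : Measure Ω}
  {H : Type*} [NormedAddCommGroup H] [InnerProductSpace ℂ H] [CompleteSpace H]
  [SecondCountableTopology H]

lemma aux_integrable_normsq (f : Lp H 2 μ) : Integrable (fun ω => ‖f ω‖ ^ 2) μ := by
  have h := (L2.integrable_inner (𝕜 := ℂ) f f).re
  refine h.congr (Filter.Eventually.of_forall fun ω => ?_)
  simp [inner_self_eq_norm_sq]
  norm_cast

lemma aux_norm_sq_eq (f : Lp H 2 μ) : ‖f‖ ^ 2 = ∫ ω, ‖f ω‖ ^ 2 ∂μ := by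
  rw [InnerProductSpace.norm_sq_eq_re_inner (𝕜 := ℂ), L2.inner_def, ← integral_re (L2.integrable_inner (𝕜 := ℂ) f f)]
  refine integral_congr_ae (Filter.Eventually.of_forall fun ω => ?_)
  simp [inner_self_eq_norm_sq]
  norm_cast

end Aux

/-- If `W ⊆ L²(Ω, H)` is a closed subspace invariant under multiplication by `L^∞(Ω)`
functions, and `U : W → L²(Ω, H)` is bounded linear and multiplication preserving
(`U(gφ) = g·(Uφ)` for `g ∈ L^∞`), then `‖(Uφ)(ω)‖ ≤ ‖U‖ ‖φ(ω)‖` a.e. for each `φ ∈ W`. -/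
theorem stmt11 {Ω : Type*} [MeasurableSpace Ω] (μ : Measure Ω) [SigmaFinite μ]
    {H : Type*} [NormedAddCommGroup H] [InnerProductSpace ℂ H] [CompleteSpace H]
    [SecondCountableTopology H]
    (W : Submodule ℂ (Lp H 2 μ)) (hWc : IsClosed (W : Set (Lp H 2 μ)))
    (U : W →L[ℂ] Lp H 2 μ)
    -- `W` is invariant under multiplication by `L^∞` functions
    (hWinv : ∀ (g : Ω → ℂ), MemLp g ∞ μ → ∀ φ : W,
      ∃ ψ : W, ⇑(ψ : Lp H 2 μ) =ᵐ[μ] fun ω => g ω • (φ : Lp H 2 μ) ω)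
    -- `U` is multiplication preserving: `U(gφ) = g • (Uφ)`
    (hU : ∀ (g : Ω → ℂ), MemLp g ∞ μ → ∀ φ ψ : W,
      (⇑(ψ : Lp H 2 μ) =ᵐ[μ] fun ω => g ω • (φ : Lp H 2 μ) ω) →
      ⇑(U ψ) =ᵐ[μ] fun ω => g ω • (U φ) ω) :
    ∀ φ : W, ∀ᵐ ω ∂μ, ‖(U φ) ω‖ ≤ ‖U‖ * ‖(φ : Lp H 2 μ) ω‖ := by
  intro φ
  -- it suffices to prove the squared inequality a.e.
  have key : ∀ᵐ ω ∂μ, ‖(U φ) ω‖ ^ 2 ≤ ‖U‖ ^ 2 * ‖(φ : Lp H 2 μ) ω‖ ^ 2 := by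
    refine ae_le_of_forall_setIntegral_le (aux_integrable_normsq (U φ))
      ((aux_integrable_normsq ((φ : Lp H 2 μ))).const_mul _) ?_
    intro s hs hμs
    -- multiply by the indicator of `s`
    set g : Ω → ℂ := s.indicator (fun _ => (1 : ℂ)) with hg_def
    have hg : MemLp g ∞ μ := by
      refine memLp_top_of_bound
        ((measurable_const.indicator hs).aestronglyMeasurable) 1
        (Filter.Eventually.of_forall fun ω => ?_)
      by_cases h : ω ∈ s <;> simp [g, h]
    obtain ⟨ψ, hψ⟩ := hWinv g hg φ
    have hUψ := hU g hg φ ψ hψ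
    -- compute the squared norms
    have hψ_sq : ‖(ψ : Lp H 2 μ)‖ ^ 2 = ∫ ω in s, ‖(φ : Lp H 2 μ) ω‖ ^ 2 ∂μ := by
      rw [aux_norm_sq_eq, ← integral_indicator hs]
      refine integral_congr_ae (hψ.mono fun ω hω => ?_)
      dsimp only
      rw [hω]
      by_cases h : ω ∈ s <;> simp [g, h]
    have hUψ_sq : ‖U ψ‖ ^ 2 = ∫ ω in s, ‖(U φ) ω‖ ^ 2 ∂μ := by
      rw [aux_norm_sq_eq, ← integral_indicator hs]
      refine integral_congr_ae (hUψ.mono fun ω hω => ?_)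
      dsimp only
      rw [hω]
      by_cases h : ω ∈ s <;> simp [g, h]
    have hle : ‖U ψ‖ ^ 2 ≤ ‖U‖ ^ 2 * ‖(ψ : Lp H 2 μ)‖ ^ 2 := by
      have := U.le_opNorm ψ
      have h2 : ‖U ψ‖ ^ 2 ≤ (‖U‖ * ‖ψ‖) ^ 2 := by
        apply pow_le_pow_left₀ (norm_nonneg _) this
      calc ‖U ψ‖ ^ 2 ≤ (‖U‖ * ‖ψ‖) ^ 2 := h2
        _ = ‖U‖ ^ 2 * ‖(ψ : Lp H 2 μ)‖ ^ 2 := by rw [mul_pow]; rfl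
    rw [hUψ_sq, hψ_sq] at hle
    rw [integral_const_mul]
    exact hle
  refine key.mono fun ω hω => ?_
  have h1 : (0 : ℝ) ≤ ‖U‖ * ‖(φ : Lp H 2 μ) ω‖ := by positivity
  nlinarith [norm_nonneg ((U φ) ω), hω]
end

section
/- Let (Ω, m) be a σ-finite measure space, H a separable Hilbert space, and R : Ω → B(H) weakly measurable with ess sup ‖R(ω)‖ < ∞. Let U be the induced operator on L²(Ω, H), (Uφ)(ω) = R(ω)(φ(ω)). If (φ_n)_{n∈ℕ} is a sequence in L²(Ω, H) such that (φ_n(ω))_n is a Parseval frame for H for a.e. ω, and ∑_n ‖Uφ_n‖² < ∞, then R(ω) is a Hilbert–Schmidt operator for a.e. ω ∈ Ω; in fact ∫_Ω ‖R(ω)‖²_{HS} dm(ω) = ∑_n ‖Uφ_n‖² < ∞. -/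
open MeasureTheory
open scoped ComplexInnerProductSpace ENNReal NNReal

theorem nnnorm_sq_eq_lintegral {Ω : Type*} [MeasurableSpace Ω] {μ : Measure Ω}
    {H : Type*} [NormedAddCommGroup H] (f : Lp H 2 μ) :
    (‖f‖₊ : ℝ≥0∞) ^ 2 = ∫⁻ ω, (‖f ω‖₊ : ℝ≥0∞) ^ 2 ∂μ := by
  have h := eLpNorm_eq_lintegral_rpow_enorm_toReal (p := 2) (f := ⇑f) (μ := μ) two_ne_zero
    ENNReal.ofNat_ne_top
  have hc : (‖f‖₊ : ℝ≥0∞) = eLpNorm f 2 μ := by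
    rw [Lp.nnnorm_def, ENNReal.coe_toNNReal (Lp.eLpNorm_ne_top f)]
  rw [hc, h]
  rw [ENNReal.toReal_ofNat] at *
  rw [← ENNReal.rpow_natCast _ 2, ← ENNReal.rpow_mul]
  norm_num
  rfl

/-- Let `U` on `L²(Ω, H)` be induced by a weakly measurable, essentially bounded field of
operators `R`, and let `(φ n)` be a sequence in `L²(Ω, H)` whose fibers `(φ n ω)` form a
Parseval frame for `H` a.e. If `∑ ‖U φ_n‖² < ∞` then `R ω` is Hilbert–Schmidt for a.e. `ω`
(its Hilbert–Schmidt norm squared being `∑ ‖R ω (φ n ω)‖²`), and in fact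
`∫ ‖R ω‖_{HS}² dμ = ∑ ‖U φ_n‖²`. -/
theorem stmt15 {Ω : Type*} [MeasurableSpace Ω] (μ : Measure Ω) [SigmaFinite μ]
    {H : Type*} [NormedAddCommGroup H] [InnerProductSpace ℂ H] [CompleteSpace H]
    [SecondCountableTopology H]
    (R : Ω → (H →L[ℂ] H))
    (hRmeas : ∀ a b : H, Measurable fun ω => (⟪R ω a, b⟫ : ℂ))
    (hRbdd : essSup (fun ω => (‖R ω‖₊ : ℝ≥0∞)) μ ≠ ⊤)
    (U : Lp H 2 μ →L[ℂ] Lp H 2 μ)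
    (hU : ∀ φ : Lp H 2 μ, ⇑(U φ) =ᵐ[μ] fun ω => R ω (φ ω))
    (φ : ℕ → Lp H 2 μ)
    (hframe : ∀ᵐ ω ∂μ, ∀ x : H,
      ∑' n, (‖⟪x, φ n ω⟫‖₊ ^ 2 : ℝ≥0∞) = (‖x‖₊ ^ 2 : ℝ≥0∞))
    (hsum : Summable fun n => ‖U (φ n)‖ ^ 2) :
    (∀ᵐ ω ∂μ, Summable fun n => ‖R ω ((φ n) ω)‖ ^ 2) ∧
      ∫⁻ ω, (∑' n, (‖R ω ((φ n) ω)‖₊ ^ 2 : ℝ≥0∞)) ∂μ =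
        ∑' n, (‖U (φ n)‖₊ ^ 2 : ℝ≥0∞) := by
  have hmeas : ∀ n, AEMeasurable (fun ω => (‖R ω ((φ n) ω)‖₊ : ℝ≥0∞) ^ 2) μ := by
    intro n
    have h1 : AEStronglyMeasurable (fun ω => R ω ((φ n) ω)) μ :=
      (Lp.aestronglyMeasurable (U (φ n))).congr (hU (φ n))
    exact h1.enorm.pow_const 2
  have key : ∀ n, (‖U (φ n)‖₊ : ℝ≥0∞) ^ 2 = ∫⁻ ω, (‖R ω ((φ n) ω)‖₊ : ℝ≥0∞) ^ 2 ∂μ := by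
    intro n
    rw [nnnorm_sq_eq_lintegral (U (φ n))]
    exact lintegral_congr_ae ((hU (φ n)).mono fun ω h => by dsimp only; rw [h])
  have hswap : ∫⁻ ω, (∑' n, (‖R ω ((φ n) ω)‖₊ ^ 2 : ℝ≥0∞)) ∂μ =
      ∑' n, (‖U (φ n)‖₊ ^ 2 : ℝ≥0∞) := by
    rw [lintegral_tsum hmeas]
    exact tsum_congr fun n => (key n).symm
  refine ⟨?_, hswap⟩
  -- finiteness of RHS
  have hsumnn : Summable fun n => (‖U (φ n)‖₊ ^ 2 : ℝ≥0) := by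
    rw [← NNReal.summable_coe]
    simpa [NNReal.coe_pow] using hsum
  have hfin : (∑' n, (‖U (φ n)‖₊ ^ 2 : ℝ≥0∞)) ≠ ⊤ := by
    simp_rw [← ENNReal.coe_pow]
    exact ENNReal.tsum_coe_ne_top_iff_summable.2 hsumnn
  have hae : ∀ᵐ ω ∂μ, (∑' n, (‖R ω ((φ n) ω)‖₊ ^ 2 : ℝ≥0∞)) ≠ ⊤ := by
    have := ae_lt_top' (AEMeasurable.ennreal_tsum hmeas) (hswap ▸ hfin)
    exact this.mono fun ω h => h.ne
  refine hae.mono fun ω h => ?_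
  have : Summable fun n => (‖R ω ((φ n) ω)‖₊ ^ 2 : ℝ≥0) := by
    rw [← ENNReal.tsum_coe_ne_top_iff_summable]
    simpa [ENNReal.coe_pow] using h
  have := NNReal.summable_coe.2 this
  simpa [NNReal.coe_pow] using this
end
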